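/- For positive definite n×n real matrices Σ₁, Σ₂ and λ > 0, the matrix Σ_λ := Σ₁^{1/2}(Σ₁^{1/2} Σ₂ Σ₁^{1/2} + λ² I)^{1/2} Σ₁^{-1/2} - λ I satisfies the equation λ Σ₁^{-1} Σ_λ + λ Σ_λᵀ Σ₁^{-1} = Σ₂ - Σ_λᵀ Σ₁^{-1} Σ_λ. -/
import Mathlib


open Matrix

/-- For positive definite `S1, S2` and `l > 0`, with `A` the
symmetric positive definite square root of `S1` and `B` the symmetric positive
definite square root of `A * S2 * A + l² I`, the matrix
`Sl := A * B * A⁻¹ - l • I` satisfies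
`l • (S1⁻¹ * Sl) + l • (Slᵀ * S1⁻¹) = S2 - Slᵀ * S1⁻¹ * Sl`. -/
theorem stmt1 (n : ℕ) (S1 S2 : Matrix (Fin n) (Fin n) ℝ)
    (hS1 : S1.PosDef) (hS2 : S2.PosDef) (l : ℝ) (hl : 0 < l)
    (A : Matrix (Fin n) (Fin n) ℝ) (hA : A.PosDef) (hA2 : A * A = S1)
    (B : Matrix (Fin n) (Fin n) ℝ) (hB : B.PosDef)
    (hB2 : B * B = A * S2 * A + (l ^ 2) • (1 : Matrix (Fin n) (Fin n) ℝ)) :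
    l • (S1⁻¹ * (A * B * A⁻¹ - l • (1 : Matrix (Fin n) (Fin n) ℝ)))
      + l • ((A * B * A⁻¹ - l • (1 : Matrix (Fin n) (Fin n) ℝ))ᵀ * S1⁻¹)
      = S2 - (A * B * A⁻¹ - l • (1 : Matrix (Fin n) (Fin n) ℝ))ᵀ * S1⁻¹
          * (A * B * A⁻¹ - l • (1 : Matrix (Fin n) (Fin n) ℝ)) := by
  have hAt : Aᵀ = A := hA.isHermitian
  have hBt : Bᵀ = B := hB.isHermitian
  have hAu : IsUnit A.det := isUnit_iff_ne_zero.mpr hA.det_pos.ne'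
  have h1 : A * A⁻¹ = 1 := Matrix.mul_nonsing_inv A hAu
  have h2 : A⁻¹ * A = 1 := Matrix.nonsing_inv_mul A hAu
  have hS1inv : S1⁻¹ = A⁻¹ * A⁻¹ := by rw [← hA2, Matrix.mul_inv_rev]
  rw [hS1inv]
  simp only [transpose_sub, transpose_mul, transpose_smul, transpose_one,
    Matrix.transpose_nonsing_inv, hAt, hBt]
  have key : ∀ X : Matrix (Fin n) (Fin n) ℝ, A⁻¹ * (A * X) = X := by
    intro X; rw [← Matrix.mul_assoc, h2, Matrix.one_mul]
  have key3 : ∀ X : Matrix (Fin n) (Fin n) ℝ, A * (A⁻¹ * X) = X := by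
    intro X; rw [← Matrix.mul_assoc, h1, Matrix.one_mul]
  simp only [Matrix.mul_sub, Matrix.sub_mul, Matrix.mul_smul, Matrix.smul_mul,
    Matrix.mul_one, Matrix.one_mul, smul_sub, smul_smul, Matrix.mul_assoc, key, key3]
  have hBB : A⁻¹ * (B * (B * A⁻¹)) = S2 + (l * l) • (A⁻¹ * A⁻¹) := by
    rw [← Matrix.mul_assoc B B, hB2, Matrix.add_mul, Matrix.smul_mul, Matrix.one_mul,
        Matrix.mul_add, Matrix.mul_smul, Matrix.mul_assoc, Matrix.mul_assoc, key, h1, Matrix.mul_one, pow_two]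
  rw [hBB]
  module
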